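/- arXiv:1608.08955 — 2 statements merged into one kernel-verified Lean document; each statement's English description precedes it below -/
import Mathlib

section
/- Let λ₁,…,λ_m be real numbers with H_1,…,H_p > 0 (normalized elementary symmetric functions). If 1 ≤ i < j ≤ p and H_{i-1} H_j = H_{j-1} H_i, then λ₁ = λ₂ = ⋯ = λ_m. -/
open Finset

/-- The `k`-th elementary symmetric polynomial of `λ₁,…,λ_m`. -/
noncomputable def esymm (m k : ℕ) (lam : Fin m → ℝ) : ℝ :=
  ∑ s ∈ (Finset.univ : Finset (Fin m)).powersetCard k, ∏ i ∈ s, lam i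

/-- The `k`-th elementary symmetric polynomial of the `m−1` variables with `λ_l` omitted. -/
noncomputable def esymmOmit (m k : ℕ) (lam : Fin m → ℝ) (l : Fin m) : ℝ :=
  ∑ s ∈ ((Finset.univ : Finset (Fin m)).erase l).powersetCard k, ∏ i ∈ s, lam i

/-- Normalized `k`-th elementary symmetric function `H_k = σ_k / C(m,k)`. -/
noncomputable def Hk (m k : ℕ) (lam : Fin m → ℝ) : ℝ := esymm m k lam / (m.choose k)

/-- Normalized `k`-th elementary symmetric function of the tuple with `λ_l` omitted. -/
noncomputable def HkOmit (m k : ℕ) (lam : Fin m → ℝ) (l : Fin m) : ℝ :=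
  esymmOmit m k lam l / ((m - 1).choose k)

/-!
Newton's inequalities `H_k H_{k+2} ≤ H_{k+1}²` hold for every finite multiset of reals. By
Rolle's theorem the derivative of `∏ (X - x)` again has only real roots, and these roots have
the same `H_0, …, H_{n-1}`; so one may assume there are exactly `k + 2` numbers. Then
`x ↦ x⁻¹` turns `H_k, H_{k+1}, H_{k+2}` into `H_2, H_1, H_0` times `∏ x`, and the inequality
becomes `H_2 ≤ H_1²`, whose defect is a positive multiple of the variance.

When all `H_k` are positive the ratios `H_{k+1} / H_k` therefore decrease, so
`H_{i-1} H_j = H_{j-1} H_i` forces `H_{i-1} H_{i+1} = H_i²`. Following equality back through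
the same reductions, the variance vanishes.
-/

namespace Multiset

section CommSemiring

variable {R : Type*} [CommSemiring R] (s : Multiset R)

theorem esymm_zero : s.esymm 0 = 1 := by
  simp [esymm]

theorem esymm_one : s.esymm 1 = s.sum := by
  simp [esymm, powersetCard_one, map_map]

theorem esymm_eq_zero_of_card_lt {k : ℕ} (h : card s < k) : s.esymm k = 0 := by
  simp [esymm, powersetCard_eq_empty _ h]

theorem esymm_cons (a : R) (k : ℕ) :
    (a ::ₘ s).esymm (k + 1) = s.esymm (k + 1) + a * s.esymm k := by
  simp only [esymm, powersetCard_cons, map_add, sum_add, map_map, Function.comp_def, prod_cons,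
    sum_map_mul_left]

theorem esymm_card : s.esymm (card s) = s.prod := by
  induction s using Multiset.induction with
  | empty => simp [esymm_zero]
  | cons a s ih =>
    rw [card_cons, esymm_cons, esymm_eq_zero_of_card_lt s (Nat.lt_succ_self _), ih, prod_cons,
      zero_add]

end CommSemiring

section CommRing

variable {R : Type*} [CommRing R] (s : Multiset R)

theorem two_mul_esymm_two : 2 * s.esymm 2 = s.sum ^ 2 - (s.map (· ^ 2)).sum := by
  induction s using Multiset.induction with
  | empty => simp [esymm_eq_zero_of_card_lt 0 (k := 2) (by simp)]
  | cons a s ih =>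
    rw [esymm_cons, esymm_one, sum_cons, map_cons, sum_cons]
    linear_combination ih

theorem sum_map_sub_sq (c : R) :
    (s.map fun x => (x - c) ^ 2).sum = (s.map (· ^ 2)).sum - 2 * c * s.sum + card s * c ^ 2 := by
  induction s using Multiset.induction with
  | empty => simp
  | cons a s ih =>
    simp only [map_cons, sum_cons, card_cons, ih]
    push_cast
    ring

end CommRing

theorem esymm_map_inv_mul_prod {K : Type*} [Field K] (s : Multiset K) (hs : ∀ x ∈ s, x ≠ 0)
    {j : ℕ} (hj : j ≤ card s) :
    (s.map (·⁻¹)).esymm j * s.prod = s.esymm (card s - j) := by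
  induction s using Multiset.induction generalizing j with
  | empty => simp_all [esymm_zero]
  | cons a s ih =>
    have ha : a ≠ 0 := hs a (mem_cons_self a s)
    have hs' : ∀ x ∈ s, x ≠ 0 := fun x hx => hs x (mem_cons_of_mem hx)
    rw [card_cons] at hj ⊢
    rcases j with _ | j
    · rw [esymm_zero, one_mul, Nat.sub_zero, ← card_cons, esymm_card]
    rcases Nat.lt_or_ge j (card s) with hlt | hge
    · rw [map_cons, esymm_cons, prod_cons,
        show card s + 1 - (j + 1) = card s - (j + 1) + 1 by omega, esymm_cons,
        show card s - (j + 1) + 1 = card s - j by omega, ← ih hs' hlt, ← ih hs' hlt.le]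
      field_simp
      ring
    · obtain rfl : j = card s := by omega
      have h := ih hs' le_rfl
      rw [Nat.sub_self, esymm_zero] at h
      rw [map_cons, esymm_cons, esymm_eq_zero_of_card_lt _ (by simp), prod_cons, Nat.sub_self,
        esymm_zero, zero_add]
      linear_combination (a⁻¹ * a) * h + inv_mul_cancel₀ ha

noncomputable def normalizedEsymm {K : Type*} [Field K] (s : Multiset K) (k : ℕ) : K :=
  s.esymm k / (card s).choose k

section Field

variable {K : Type*} [Field K] (s : Multiset K)

theorem normalizedEsymm_zero : s.normalizedEsymm 0 = 1 := by
  simp [normalizedEsymm, esymm_zero]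

theorem normalizedEsymm_card : s.normalizedEsymm (card s) = s.prod := by
  simp [normalizedEsymm, esymm_card]

theorem normalizedEsymm_eq_zero_of_card_lt {k : ℕ} (h : card s < k) :
    s.normalizedEsymm k = 0 := by
  rw [normalizedEsymm, esymm_eq_zero_of_card_lt s h, zero_div]

theorem le_card_of_normalizedEsymm_ne_zero {k : ℕ} (h : s.normalizedEsymm k ≠ 0) :
    k ≤ card s :=
  not_lt.mp fun hlt => h (normalizedEsymm_eq_zero_of_card_lt s hlt)

theorem normalizedEsymm_map_inv_mul_prod (hs : ∀ x ∈ s, x ≠ 0) {j : ℕ} (hj : j ≤ card s) :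
    (s.map (·⁻¹)).normalizedEsymm j * s.prod = s.normalizedEsymm (card s - j) := by
  rw [normalizedEsymm, normalizedEsymm, card_map, Nat.choose_symm hj,
    ← esymm_map_inv_mul_prod s hs hj, div_mul_eq_mul_div]

theorem sq_normalizedEsymm_sub_mul_of_card_eq {k : ℕ} (hk : card s = k + 2)
    (hs : ∀ x ∈ s, x ≠ 0) :
    s.normalizedEsymm (k + 1) ^ 2 - s.normalizedEsymm k * s.normalizedEsymm (k + 2) =
      ((s.map (·⁻¹)).normalizedEsymm 1 ^ 2 - (s.map (·⁻¹)).normalizedEsymm 2) *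
        s.prod ^ 2 := by
  have e1 := normalizedEsymm_map_inv_mul_prod s hs (j := 1) (by omega)
  have e2 := normalizedEsymm_map_inv_mul_prod s hs (j := 2) (by omega)
  rw [hk, show k + 2 - 1 = k + 1 by omega] at e1
  rw [hk, Nat.add_sub_cancel] at e2
  rw [← e1, ← e2, ← hk, normalizedEsymm_card]
  ring

theorem sq_normalizedEsymm_one_sub_two [CharZero K] (h : 2 ≤ card s) :
    s.normalizedEsymm 1 ^ 2 - s.normalizedEsymm 2 =
      (s.map fun x => (x - s.normalizedEsymm 1) ^ 2).sum / (card s * (card s - 1)) := by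
  have hn0 : (card s : K) ≠ 0 := Nat.cast_ne_zero.mpr (by omega)
  have hn1 : (card s : K) - 1 ≠ 0 := sub_ne_zero.mpr (Nat.cast_ne_one.mpr (by omega))
  have he2 : s.esymm 2 = (s.sum ^ 2 - (s.map (· ^ 2)).sum) / 2 := by
    linear_combination two_mul_esymm_two s / 2
  rw [sum_map_sub_sq, normalizedEsymm, normalizedEsymm, Nat.choose_one_right, esymm_one,
    Nat.cast_choose_two, he2]
  field_simp
  ring

end Field

section LinearOrderedField

variable {K : Type*} [Field K] [LinearOrder K] [IsStrictOrderedRing K] (s : Multiset K)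

theorem normalizedEsymm_two_le_sq (h : 2 ≤ card s) :
    s.normalizedEsymm 2 ≤ s.normalizedEsymm 1 ^ 2 := by
  have hn : (2 : K) ≤ card s := by exact_mod_cast h
  have hvar : 0 ≤ (s.map fun x => (x - s.normalizedEsymm 1) ^ 2).sum /
      ((card s : K) * (card s - 1)) :=
    div_nonneg (sum_nonneg fun _ hy => by obtain ⟨x, -, rfl⟩ := mem_map.mp hy; positivity)
      (by nlinarith)
  linarith [sq_normalizedEsymm_one_sub_two s h]

theorem sq_normalizedEsymm_one_eq_two_iff (h : 2 ≤ card s) :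
    s.normalizedEsymm 1 ^ 2 = s.normalizedEsymm 2 ↔ ∀ x ∈ s, ∀ y ∈ s, x = y := by
  have hn : (2 : K) ≤ card s := by exact_mod_cast h
  rw [← sub_eq_zero, sq_normalizedEsymm_one_sub_two s h, div_eq_zero_iff,
    or_iff_left (by nlinarith)]
  constructor
  · intro hsum
    have hmean : ∀ x ∈ s, x = s.normalizedEsymm 1 := fun x hx => by
      have := single_le_sum (fun _ hy => by obtain ⟨x, -, rfl⟩ := mem_map.mp hy; positivity) _
        (mem_map_of_mem (fun x => (x - s.normalizedEsymm 1) ^ 2) hx)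
      nlinarith [sq_nonneg (x - s.normalizedEsymm 1)]
    exact fun x hx y hy => (hmean x hx).trans (hmean y hy).symm
  · intro hconst
    obtain ⟨c, hc⟩ := exists_mem_of_ne_zero (card_pos.mp (by omega : 0 < card s))
    have hs : s = replicate (card s) c := eq_replicate.2 ⟨rfl, fun b hb => hconst b hb c hc⟩
    have hn0 : (card s : K) ≠ 0 := by positivity
    rw [hs]
    simp [normalizedEsymm, esymm_one, mul_div_cancel_left₀ c hn0]

theorem normalizedEsymm_mul_le_sq_of_card_eq {k : ℕ} (hk : card s = k + 2) :
    s.normalizedEsymm k * s.normalizedEsymm (k + 2) ≤ s.normalizedEsymm (k + 1) ^ 2 := by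
  by_cases hs : ∀ x ∈ s, x ≠ 0
  · have := sq_normalizedEsymm_sub_mul_of_card_eq s hk hs
    have := normalizedEsymm_two_le_sq (s.map (·⁻¹)) (by rw [card_map]; omega)
    nlinarith [sq_nonneg s.prod]
  · push Not at hs
    obtain ⟨x, hx, rfl⟩ := hs
    rw [← hk, normalizedEsymm_card, prod_eq_zero hx, mul_zero]
    positivity

theorem forall_eq_of_normalizedEsymm_mul_eq_sq_of_card_eq {k : ℕ} (hk : card s = k + 2)
    (hpos : 0 < s.normalizedEsymm (k + 2))
    (heq : s.normalizedEsymm k * s.normalizedEsymm (k + 2) = s.normalizedEsymm (k + 1) ^ 2) :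
    ∀ x ∈ s, ∀ y ∈ s, x = y := by
  rw [← hk, normalizedEsymm_card] at hpos
  have hs : ∀ x ∈ s, x ≠ 0 := fun x hx hx0 => hpos.ne' (prod_eq_zero (hx0 ▸ hx))
  have hinv : ∀ x ∈ s.map (·⁻¹), ∀ y ∈ s.map (·⁻¹), x = y := by
    rw [← sq_normalizedEsymm_one_eq_two_iff _ (by rw [card_map]; omega)]
    have := sq_normalizedEsymm_sub_mul_of_card_eq s hk hs
    rw [heq, sub_self, eq_comm, mul_eq_zero, sub_eq_zero] at this
    exact this.resolve_right (by positivity)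
  exact fun x hx y hy => inv_injective (hinv _ (mem_map_of_mem _ hx) _ (mem_map_of_mem _ hy))

end LinearOrderedField

section Real

variable (s : Multiset ℝ)

open Polynomial in
theorem exists_derivative_prod_X_sub_C_eq {n : ℕ} (hs : card s = n + 1) :
    ∃ μ : Multiset ℝ, card μ = n ∧
      derivative (s.map fun a => X - C a).prod =
        C ((n : ℝ) + 1) * (μ.map fun a => X - C a).prod := by
  set p := (s.map fun a => X - C a).prod
  have hp : p.natDegree = n + 1 := by rw [natDegree_multiset_prod_X_sub_C_eq_card, hs]
  have hdeg : (derivative p).natDegree = n := by rw [natDegree_derivative, hp, Nat.add_sub_cancel]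
  have hroots : card (derivative p).roots = n := by
    have rolle := card_roots_le_derivative p
    rw [roots_multiset_prod_X_sub_C, hs] at rolle
    have := card_roots' (derivative p)
    omega
  refine ⟨(derivative p).roots, hroots, ?_⟩
  have hlead : (derivative p).leadingCoeff = n + 1 := by
    have hmonic : p.Monic := monic_multiset_prod_of_monic _ _ fun a _ => monic_X_sub_C a
    rw [leadingCoeff_derivative, hmonic.leadingCoeff, hp]
    push_cast
    ring
  rw [← hlead, C_leadingCoeff_mul_prod_multiset_X_sub_C (hroots.trans hdeg.symm)]

theorem exists_card_eq_normalizedEsymm_eq_of_card_eq_succ {n : ℕ} (hs : card s = n + 1) :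
    ∃ μ : Multiset ℝ, card μ = n ∧
      ∀ j ≤ n, μ.normalizedEsymm j = s.normalizedEsymm j := by
  obtain ⟨μ, hμ, hderiv⟩ := exists_derivative_prod_X_sub_C_eq s hs
  refine ⟨μ, hμ, fun j hj => ?_⟩
  have hcoeff := congrArg (Polynomial.coeff · (n - j)) hderiv
  simp only [Polynomial.coeff_derivative, Polynomial.coeff_C_mul] at hcoeff
  rw [prod_X_sub_C_coeff s (by omega), prod_X_sub_C_coeff μ (by omega), hs, hμ,
    show n + 1 - (n - j + 1) = j by omega, show n - (n - j) = j by omega] at hcoeff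
  have hesymm : ((n : ℝ) + 1 - j) * s.esymm j = ((n : ℝ) + 1) * μ.esymm j := by
    refine mul_left_cancel₀ (pow_ne_zero j (neg_ne_zero.mpr one_ne_zero)) ?_
    rw [Nat.cast_sub hj] at hcoeff
    linear_combination hcoeff
  have hchoose : ((n.choose j : ℕ) : ℝ) * (n + 1) = ((n + 1).choose j : ℕ) * (n + 1 - j) := by
    have := congrArg (Nat.cast (R := ℝ)) (Nat.choose_mul_succ_eq n j)
    push_cast [Nat.cast_sub (show j ≤ n + 1 by omega)] at this
    exact this
  have hpos : (0 : ℝ) < n.choose j := by exact_mod_cast Nat.choose_pos hj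
  have hpos' : (0 : ℝ) < (n + 1).choose j := by exact_mod_cast Nat.choose_pos (by omega)
  rw [normalizedEsymm, normalizedEsymm, hμ, hs, div_eq_div_iff hpos.ne' hpos'.ne']
  refine mul_left_cancel₀ (show (n : ℝ) + 1 ≠ 0 by positivity) ?_
  linear_combination (-((n + 1).choose j : ℝ)) * hesymm - s.esymm j * hchoose

theorem exists_card_eq_normalizedEsymm_eq {d : ℕ} (hd : d ≤ card s) :
    ∃ μ : Multiset ℝ, card μ = d ∧
      ∀ j ≤ d, μ.normalizedEsymm j = s.normalizedEsymm j := by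
  obtain ⟨e, he⟩ := Nat.exists_eq_add_of_le hd
  clear hd
  induction e generalizing s with
  | zero => exact ⟨s, he, fun _ _ => rfl⟩
  | succ e ih =>
    obtain ⟨ν, hν, hνs⟩ :=
      exists_card_eq_normalizedEsymm_eq_of_card_eq_succ s (n := d + e) (by omega)
    obtain ⟨μ, hμ, hμν⟩ := ih ν hν
    exact ⟨μ, hμ, fun j hj => (hμν j hj).trans (hνs j (by omega))⟩

theorem normalizedEsymm_mul_le_sq {k : ℕ} (hk : k + 2 ≤ card s) :
    s.normalizedEsymm k * s.normalizedEsymm (k + 2) ≤ s.normalizedEsymm (k + 1) ^ 2 := by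
  obtain ⟨μ, hμ, hμs⟩ := exists_card_eq_normalizedEsymm_eq s hk
  rw [← hμs k (by omega), ← hμs (k + 1) (by omega), ← hμs (k + 2) le_rfl]
  exact normalizedEsymm_mul_le_sq_of_card_eq μ hμ

theorem forall_eq_of_normalizedEsymm_mul_eq_sq {k : ℕ} (hk : k + 2 ≤ card s)
    (hpos : 0 < s.normalizedEsymm (k + 2))
    (heq : s.normalizedEsymm k * s.normalizedEsymm (k + 2) = s.normalizedEsymm (k + 1) ^ 2) :
    ∀ x ∈ s, ∀ y ∈ s, x = y := by
  obtain ⟨μ, hμ, hμs⟩ := exists_card_eq_normalizedEsymm_eq s hk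
  rw [← hμs k (by omega), ← hμs (k + 1) (by omega), ← hμs (k + 2) le_rfl] at heq
  rw [← hμs (k + 2) le_rfl] at hpos
  have hμconst := forall_eq_of_normalizedEsymm_mul_eq_sq_of_card_eq μ hμ hpos heq
  rw [← sq_normalizedEsymm_one_eq_two_iff s (by omega), ← hμs 1 (by omega),
    ← hμs 2 (by omega)]
  exact (sq_normalizedEsymm_one_eq_two_iff μ (by omega)).2 hμconst

theorem antitoneOn_normalizedEsymm_succ_div {n : ℕ}
    (hpos : ∀ k ≤ n, 0 < s.normalizedEsymm k) :
    AntitoneOn (fun k => s.normalizedEsymm (k + 1) / s.normalizedEsymm k) (Set.Iio n) := by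
  have hn := le_card_of_normalizedEsymm_ne_zero s (hpos n le_rfl).ne'
  refine antitoneOn_of_add_one_le Set.ordConnected_Iio fun k _ _ hk => ?_
  rw [Set.mem_Iio] at hk
  rw [div_le_div_iff₀ (hpos _ (by omega)) (hpos _ (by omega))]
  linear_combination normalizedEsymm_mul_le_sq s (k := k) (by omega)

theorem forall_eq_of_normalizedEsymm_mul_eq {i j : ℕ}
    (hpos : ∀ k ≤ j, 0 < s.normalizedEsymm k) (hi : 1 ≤ i) (hij : i < j)
    (heq : s.normalizedEsymm (i - 1) * s.normalizedEsymm j =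
      s.normalizedEsymm (j - 1) * s.normalizedEsymm i) :
    ∀ x ∈ s, ∀ y ∈ s, x = y := by
  obtain ⟨i, rfl⟩ : ∃ i', i = i' + 1 := ⟨i - 1, by omega⟩
  obtain ⟨j, rfl⟩ : ∃ j', j = j' + 1 := ⟨j - 1, by omega⟩
  simp only [Nat.add_sub_cancel] at heq
  have hcard := le_card_of_normalizedEsymm_ne_zero s (hpos (j + 1) le_rfl).ne'
  have hr := antitoneOn_normalizedEsymm_succ_div s hpos
  have hmem : ∀ k ≤ j, k ∈ Set.Iio (j + 1) := fun k hk => Set.mem_Iio.mpr (by omega)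
  have hrij : s.normalizedEsymm (i + 1) / s.normalizedEsymm i =
      s.normalizedEsymm (j + 1) / s.normalizedEsymm j := by
    rw [div_eq_div_iff (hpos i (by omega)).ne' (hpos j (by omega)).ne']
    linear_combination -heq
  have hstep : s.normalizedEsymm (i + 2) / s.normalizedEsymm (i + 1) =
      s.normalizedEsymm (i + 1) / s.normalizedEsymm i := by
    refine le_antisymm (hr (hmem i (by omega)) (hmem (i + 1) (by omega)) (by omega)) ?_
    rw [hrij]
    exact hr (hmem (i + 1) (by omega)) (hmem j le_rfl) (by omega)
  rw [div_eq_div_iff (hpos (i + 1) (by omega)).ne' (hpos i (by omega)).ne'] at hstep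
  exact forall_eq_of_normalizedEsymm_mul_eq_sq s (by omega) (hpos (i + 2) (by omega))
    (by linear_combination hstep)

end Real

end Multiset

/-- Equality case of Newton–Maclaurin: equality forces all λ's equal. -/
theorem newton_maclaurin_equality (m p : ℕ) (lam : Fin m → ℝ)
    (hpos : ∀ k, 1 ≤ k → k ≤ p → 0 < Hk m k lam)
    (i j : ℕ) (hi : 1 ≤ i) (hij : i < j) (hjp : j ≤ p)
    (heq : Hk m (i - 1) lam * Hk m j lam = Hk m (j - 1) lam * Hk m i lam) :
    ∀ a b : Fin m, lam a = lam b := by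
  intro a b
  set s : Multiset ℝ := (univ : Finset (Fin m)).val.map lam
  have hH : ∀ k, Hk m k lam = s.normalizedEsymm k := fun k => by
    rw [Hk, esymm, Multiset.normalizedEsymm, Finset.esymm_map_val, Multiset.card_map,
      card_val, card_univ, Fintype.card_fin]
  simp only [hH] at hpos heq
  have hpos' : ∀ k ≤ j, 0 < s.normalizedEsymm k := fun k hk => by
    rcases Nat.eq_zero_or_pos k with rfl | hk0
    · rw [Multiset.normalizedEsymm_zero]
      exact one_pos
    · exact hpos k hk0 (hk.trans hjp)
  exact s.forall_eq_of_normalizedEsymm_mul_eq hpos' hi hij heq _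
    (Multiset.mem_map_of_mem _ (mem_univ_val a)) _ (Multiset.mem_map_of_mem _ (mem_univ_val b))
end

section
/- Let (λ₁,…,λ_m) be positive reals, m ≥ 2, and suppose that for some 1 ≤ i < j ≤ m, (H_i/H_j)^{1/(j-i)} = H_0/H_1 (i.e. equality holds in the chain H_0/H_1 ≤ (H_i/H_j)^{1/(j-i)}). Then λ₁ = ⋯ = λ_m. -/
/-!
Newton's inequalities `H_k H_{k+2} ≤ H_{k+1}²` say that `k ↦ H_k / H_{k+1}` is nondecreasing, so
`H_i / H_j ≥ (H_1 / H_2)^(j-i) ≥ (H_0 / H_1)^(j-i)`. Equality therefore forces `H_1² = H_0 H_2`,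
the equality case of Cauchy–Schwarz `(∑ λ)² ≤ m ∑ λ²`.

Newton's inequalities are proved by induction on `m`. By Rolle's theorem the derivative of
`∏ (X + λ_a)` splits over `ℝ`, and it is positive on `[0, ∞)`, so it equals `m ∏ (X + μ_b)` for
`m - 1` positive reals `μ_b`; comparing coefficients gives `H_k(μ) = H_k(λ)` for `k < m`. This
leaves the case `k = m - 2`, which is the case `k = 0` for `λ⁻¹`, as `σ_{m-k}(λ) = (∏ λ) σ_k(λ⁻¹)`.
-/

open Finset

open Polynomial

lemma esymm_zero (m : ℕ) (lam : Fin m → ℝ) : esymm m 0 lam = 1 := by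
  simp [esymm]

lemma esymm_one (m : ℕ) (lam : Fin m → ℝ) : esymm m 1 lam = ∑ a, lam a := by
  simp [esymm, powersetCard_one]

lemma aeval_esymm (m k : ℕ) (lam : Fin m → ℝ) :
    MvPolynomial.aeval lam (MvPolynomial.esymm (Fin m) ℝ k) = esymm m k lam := by
  simp [MvPolynomial.esymm, esymm]

lemma two_mul_esymm_two (m : ℕ) (lam : Fin m → ℝ) :
    2 * esymm m 2 lam = (∑ a, lam a) ^ 2 - ∑ a, lam a ^ 2 := by
  have newton := congrArg (MvPolynomial.aeval lam) (MvPolynomial.mul_esymm_eq_sum (Fin m) ℝ 2)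
  rw [show {a ∈ antidiagonal 2 | a.1 < 2} = {(0, 2), (1, 1)} by decide, sum_pair (by decide)]
    at newton
  simp only [map_mul, map_add, map_pow, map_neg, map_one, map_ofNat, Nat.cast_ofNat, pow_one,
    aeval_esymm, esymm_zero, esymm_one, MvPolynomial.psum, map_sum, MvPolynomial.aeval_X]
    at newton
  linear_combination newton

lemma esymm_pos {m k : ℕ} (hk : k ≤ m) {lam : Fin m → ℝ} (hpos : ∀ a, 0 < lam a) :
    0 < esymm m k lam :=
  sum_pos (fun _ _ => prod_pos fun i _ => hpos i) (powersetCard_nonempty.2 (by simpa using hk))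

lemma Hk_pos {m k : ℕ} (hk : k ≤ m) {lam : Fin m → ℝ} (hpos : ∀ a, 0 < lam a) :
    0 < Hk m k lam :=
  div_pos (esymm_pos hk hpos) (by exact_mod_cast Nat.choose_pos hk)

lemma Hk_div_Hk_pos {m k l : ℕ} (hk : k ≤ m) (hl : l ≤ m) {lam : Fin m → ℝ}
    (hpos : ∀ a, 0 < lam a) : 0 < Hk m k lam / Hk m l lam :=
  div_pos (Hk_pos hk hpos) (Hk_pos hl hpos)

lemma Hk_zero (m : ℕ) (lam : Fin m → ℝ) : Hk m 0 lam = 1 := by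
  simp [Hk, esymm_zero]

lemma Hk_one_sq_sub_Hk_two {m : ℕ} (hm : 2 ≤ m) (lam : Fin m → ℝ) :
    Hk m 1 lam ^ 2 - Hk m 2 lam =
      (∑ a, ((m : ℝ) * lam a - ∑ b, lam b) ^ 2) / ((m : ℝ) ^ 3 * ((m : ℝ) - 1)) := by
  have hm1 : (m : ℝ) - 1 ≠ 0 := (sub_pos.2 (Nat.one_lt_cast.2 hm)).ne'
  have hsum : ∑ a, ((m : ℝ) * lam a - ∑ b, lam b) ^ 2 =
      m * (m * ∑ a, lam a ^ 2 - (∑ a, lam a) ^ 2) := by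
    simp only [sub_sq, sum_add_distrib, sum_sub_distrib, mul_pow, ← mul_sum, ← sum_mul,
      sum_const, card_univ, Fintype.card_fin, nsmul_eq_mul]
    ring
  have he2 : esymm m 2 lam = ((∑ a, lam a) ^ 2 - ∑ a, lam a ^ 2) / 2 := by
    linarith [two_mul_esymm_two m lam]
  rw [hsum, Hk, Hk, esymm_one, he2, Nat.cast_choose_two, Nat.choose_one_right]
  field_simp
  ring

lemma Hk_two_le_Hk_one_sq {m : ℕ} (hm : 2 ≤ m) (lam : Fin m → ℝ) :
    Hk m 2 lam ≤ Hk m 1 lam ^ 2 := by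
  have hm1 : (0 : ℝ) < m - 1 := sub_pos.2 (Nat.one_lt_cast.2 hm)
  rw [← sub_nonneg, Hk_one_sq_sub_Hk_two hm]
  positivity

lemma eq_of_Hk_one_sq_eq_Hk_two {m : ℕ} (hm : 2 ≤ m) {lam : Fin m → ℝ}
    (h : Hk m 1 lam ^ 2 = Hk m 2 lam) (a b : Fin m) : lam a = lam b := by
  have hm1 : (0 : ℝ) < m - 1 := sub_pos.2 (Nat.one_lt_cast.2 hm)
  have hzero := Hk_one_sq_sub_Hk_two hm lam
  rw [h, sub_self, eq_comm, div_eq_zero_iff, or_iff_left (by positivity),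
    sum_eq_zero_iff_of_nonneg fun _ _ => sq_nonneg _] at hzero
  have hc (c : Fin m) : (m : ℝ) * lam c = ∑ d, lam d :=
    sub_eq_zero.1 (pow_eq_zero_iff two_ne_zero |>.1 (hzero c (mem_univ c)))
  exact mul_left_cancel₀ (by positivity) ((hc a).trans (hc b).symm)

lemma compl_mem_powersetCard_univ {m j l : ℕ} (hjl : j + l = m) {s : Finset (Fin m)}
    (hs : s ∈ powersetCard j univ) : sᶜ ∈ powersetCard l univ := by
  rw [mem_powersetCard_univ] at hs ⊢
  rw [card_compl, Fintype.card_fin]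
  omega

lemma esymm_eq_prod_mul_esymm_inv {m j l : ℕ} (hjl : j + l = m) {lam : Fin m → ℝ}
    (hpos : ∀ a, 0 < lam a) : esymm m l lam = (∏ a, lam a) * esymm m j lam⁻¹ := by
  rw [esymm, esymm, mul_sum]
  refine sum_nbij' (·ᶜ) (·ᶜ) (fun s => compl_mem_powersetCard_univ (by omega))
    (fun s => compl_mem_powersetCard_univ hjl) (fun s _ => compl_compl s)
    (fun s _ => compl_compl s) fun s _ => ?_
  rw [← prod_mul_prod_compl s lam, Pi.inv_def, prod_inv_distrib, mul_assoc,
    mul_inv_cancel₀ (prod_pos fun a _ => hpos a).ne', mul_one]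

lemma Hk_eq_prod_mul_Hk_inv {m j l : ℕ} (hjl : j + l = m) {lam : Fin m → ℝ}
    (hpos : ∀ a, 0 < lam a) : Hk m l lam = (∏ a, lam a) * Hk m j lam⁻¹ := by
  rw [Hk, Hk, esymm_eq_prod_mul_esymm_inv hjl hpos, ← Nat.choose_symm_of_eq_add hjl.symm,
    mul_div_assoc]

lemma Hk_mul_Hk_le_sq_of_eq_add_two {k : ℕ} {lam : Fin (k + 2) → ℝ} (hpos : ∀ a, 0 < lam a) :
    Hk (k + 2) k lam * Hk (k + 2) (k + 2) lam ≤ Hk (k + 2) (k + 1) lam ^ 2 := by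
  set P := ∏ a, lam a
  rw [Hk_eq_prod_mul_Hk_inv (j := 2) (by omega) hpos,
    Hk_eq_prod_mul_Hk_inv (j := 0) (zero_add _) hpos,
    Hk_eq_prod_mul_Hk_inv (j := 1) (by omega) hpos, Hk_zero]
  calc P * Hk (k + 2) 2 lam⁻¹ * (P * 1) = P ^ 2 * Hk (k + 2) 2 lam⁻¹ := by ring
    _ ≤ P ^ 2 * Hk (k + 2) 1 lam⁻¹ ^ 2 := by gcongr; exact Hk_two_le_Hk_one_sq (by omega) _
    _ = (P * Hk (k + 2) 1 lam⁻¹) ^ 2 := by ring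

lemma Polynomial.card_roots_derivative_eq_natDegree {p : ℝ[X]}
    (hp : Multiset.card p.roots = p.natDegree) :
    Multiset.card (derivative p).roots = (derivative p).natDegree := by
  refine le_antisymm (card_roots' _) ?_
  have := card_roots_le_derivative p
  rw [natDegree_derivative]
  omega

lemma Multiset.exists_fin_map_eq {α : Type*} {n : ℕ} (s : Multiset α) (hs : card s = n) :
    ∃ f : Fin n → α, univ.val.map f = s := by
  obtain ⟨l, rfl⟩ := Quot.exists_rep s
  rw [Multiset.quot_mk_to_coe'', Multiset.coe_card] at *
  subst hs
  exact ⟨l.get, by rw [Fin.univ_val_map, List.ofFn_get]⟩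

lemma eval_derivative_prod_X_add_C_pos {ι : Type*} [Fintype ι] [Nonempty ι] {lam : ι → ℝ}
    (hpos : ∀ a, 0 < lam a) {x : ℝ} (hx : 0 ≤ x) :
    0 < (derivative (∏ a, (X + C (lam a)))).eval x := by
  classical
  rw [derivative_prod_finset, eval_finsetSum]
  refine sum_pos (fun a _ => ?_) univ_nonempty
  simpa [eval_prod] using prod_pos fun b _ => add_pos_of_nonneg_of_pos hx (hpos b)

lemma exists_derivative_prod_X_add_C_eq {n : ℕ} {lam : Fin (n + 1) → ℝ}
    (hpos : ∀ a, 0 < lam a) :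
    ∃ lam' : Fin n → ℝ, (∀ b, 0 < lam' b) ∧
      derivative (∏ a, (X + C (lam a))) = C ((n + 1 : ℕ) : ℝ) * ∏ b, (X + C (lam' b)) := by
  set p : ℝ[X] := ∏ a, (X + C (lam a))
  have hmonic : p.Monic := monic_prod_of_monic _ _ fun a _ => monic_X_add_C (lam a)
  have hdeg : p.natDegree = n + 1 := by
    simp [p, natDegree_prod_of_monic _ _ fun a _ => monic_X_add_C (lam a)]
  have hroots : Multiset.card p.roots = n + 1 := by
    rw [roots_prod _ _ hmonic.ne_zero]
    simp [roots_X_add_C]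
  have hsplit := card_roots_derivative_eq_natDegree (hroots.trans hdeg.symm)
  obtain ⟨r, hr⟩ := (derivative p).roots.exists_fin_map_eq
    (by rw [hsplit, natDegree_derivative, hdeg, Nat.add_sub_cancel])
  refine ⟨fun b => -r b, fun b => ?_, ?_⟩
  · have hroot : (derivative p).IsRoot (r b) :=
      isRoot_of_mem_roots (hr ▸ Multiset.mem_map_of_mem r (mem_univ_val b))
    by_contra! h
    exact (eval_derivative_prod_X_add_C_pos hpos (neg_nonpos.1 h)).ne' hroot
  · rw [← C_leadingCoeff_mul_prod_multiset_X_sub_C hsplit, leadingCoeff_derivative,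
      hmonic.leadingCoeff, hdeg, one_mul, ← hr]
    simp [prod_eq_multiset_prod, sub_eq_add_neg, Function.comp_def]

lemma mul_esymm_eq_of_derivative_eq {n k : ℕ} (hk : k ≤ n) {lam : Fin (n + 1) → ℝ}
    {lam' : Fin n → ℝ}
    (h : derivative (∏ a, (X + C (lam a))) = C ((n + 1 : ℕ) : ℝ) * ∏ b, (X + C (lam' b))) :
    ((n + 1 : ℕ) : ℝ) * esymm n k lam' = ((n + 1 - k : ℕ) : ℝ) * esymm (n + 1) k lam := by
  have hcoeff := congrArg (coeff · (n - k)) h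
  simp only [coeff_derivative, coeff_C_mul] at hcoeff
  rw [prod_X_add_C_coeff _ _ (by simp), prod_X_add_C_coeff _ _ (by simp)] at hcoeff
  simp only [card_univ, Fintype.card_fin, show n + 1 - (n - k + 1) = k by omega,
    show n - (n - k) = k by omega] at hcoeff
  rw [← esymm, ← esymm] at hcoeff
  rw [← hcoeff, show n + 1 - k = n - k + 1 by omega]
  push_cast
  ring

lemma exists_Hk_eq_of_succ {n : ℕ} {lam : Fin (n + 1) → ℝ} (hpos : ∀ a, 0 < lam a) :
    ∃ lam' : Fin n → ℝ, (∀ b, 0 < lam' b) ∧ ∀ k ≤ n, Hk n k lam' = Hk (n + 1) k lam := by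
  obtain ⟨lam', hpos', hderiv⟩ := exists_derivative_prod_X_add_C_eq hpos
  refine ⟨lam', hpos', fun k hk => ?_⟩
  have hesymm := mul_esymm_eq_of_derivative_eq hk hderiv
  have hchoose : (n.choose k : ℝ) * (n + 1 : ℕ) = (n + 1).choose k * (n + 1 - k : ℕ) := by
    exact_mod_cast Nat.choose_mul_succ_eq n k
  have hc : (n.choose k : ℝ) ≠ 0 := by exact_mod_cast (Nat.choose_pos hk).ne'
  rw [Hk, Hk, div_eq_div_iff hc (by exact_mod_cast (Nat.choose_pos (by omega)).ne')]
  apply mul_left_cancel₀ (Nat.cast_ne_zero.2 n.succ_ne_zero : ((n + 1 : ℕ) : ℝ) ≠ 0)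
  linear_combination ((n + 1).choose k : ℝ) * hesymm - esymm (n + 1) k lam * hchoose

theorem Hk_mul_Hk_le_sq {m k : ℕ} (hkm : k + 2 ≤ m) {lam : Fin m → ℝ} (hpos : ∀ a, 0 < lam a) :
    Hk m k lam * Hk m (k + 2) lam ≤ Hk m (k + 1) lam ^ 2 := by
  induction m with
  | zero => omega
  | succ n ih =>
    rcases (show k + 2 = n + 1 ∨ k + 2 ≤ n by omega) with hk | hk
    · obtain rfl : n = k + 1 := by omega
      exact Hk_mul_Hk_le_sq_of_eq_add_two hpos
    · obtain ⟨lam', hpos', hH⟩ := exists_Hk_eq_of_succ hpos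
      rw [← hH k (by omega), ← hH (k + 1) (by omega), ← hH (k + 2) hk]
      exact ih hk hpos'

lemma Hk_div_Hk_succ_le_succ {m k : ℕ} (hkm : k + 2 ≤ m) {lam : Fin m → ℝ}
    (hpos : ∀ a, 0 < lam a) :
    Hk m k lam / Hk m (k + 1) lam ≤ Hk m (k + 1) lam / Hk m (k + 2) lam := by
  rw [div_le_div_iff₀ (Hk_pos (by omega) hpos) (Hk_pos hkm hpos), ← sq]
  exact Hk_mul_Hk_le_sq hkm hpos

lemma Hk_div_Hk_succ_le_of_le {m k l : ℕ} (hkl : k ≤ l) (hlm : l + 1 ≤ m) {lam : Fin m → ℝ}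
    (hpos : ∀ a, 0 < lam a) :
    Hk m k lam / Hk m (k + 1) lam ≤ Hk m l lam / Hk m (l + 1) lam := by
  induction l, hkl using Nat.le_induction with
  | base => exact le_rfl
  | succ l hkl ih => exact (ih (by omega)).trans (Hk_div_Hk_succ_le_succ hlm hpos)

lemma pow_Hk_div_Hk_succ_le {m k i d : ℕ} (hki : k ≤ i) (him : i + d ≤ m) {lam : Fin m → ℝ}
    (hpos : ∀ a, 0 < lam a) :
    (Hk m k lam / Hk m (k + 1) lam) ^ d ≤ Hk m i lam / Hk m (i + d) lam := by
  induction d with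
  | zero => rw [pow_zero, add_zero, div_self (Hk_pos (by omega) hpos).ne']
  | succ d ih =>
    have htelescope : Hk m i lam / Hk m (i + (d + 1)) lam =
        Hk m i lam / Hk m (i + d) lam * (Hk m (i + d) lam / Hk m (i + d + 1) lam) := by
      rw [div_mul_div_cancel₀ (Hk_pos (by omega) hpos).ne', add_assoc]
    rw [pow_succ, htelescope]
    exact mul_le_mul (ih (by omega)) (Hk_div_Hk_succ_le_of_le (by omega) (by omega) hpos)
      (Hk_div_Hk_pos (by omega) (by omega) hpos).le
      (Hk_div_Hk_pos (by omega) (by omega) hpos).le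

theorem rpow_ratio_equality_rigidity_general (m : ℕ) (lam : Fin m → ℝ)
    (hpos : ∀ a, 0 < lam a) (i j : ℕ) (hi : 1 ≤ i) (hij : i < j) (hjm : j ≤ m)
    (heq : (Hk m i lam / Hk m j lam) ^ ((1 : ℝ) / ((j : ℝ) - (i : ℝ))) =
      Hk m 0 lam / Hk m 1 lam) :
    ∀ a b : Fin m, lam a = lam b := by
  obtain ⟨d, rfl⟩ : ∃ d, j = i + d := ⟨j - i, by omega⟩
  have hd : d ≠ 0 := by omega
  have hratio : Hk m i lam / Hk m (i + d) lam = (Hk m 0 lam / Hk m 1 lam) ^ d := by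
    rw [Nat.cast_add, add_sub_cancel_left, one_div, Real.rpow_inv_eq
      (Hk_div_Hk_pos (by omega) hjm hpos).le (Hk_div_Hk_pos (by omega) (by omega) hpos).le
      (Nat.cast_ne_zero.2 hd), Real.rpow_natCast] at heq
    exact heq
  have h01 := Hk_div_Hk_succ_le_succ (k := 0) (by omega) hpos
  have h10 : Hk m 1 lam / Hk m 2 lam ≤ Hk m 0 lam / Hk m 1 lam :=
    (pow_le_pow_iff_left₀ (Hk_div_Hk_pos (by omega) (by omega) hpos).le
      (Hk_div_Hk_pos (by omega) (by omega) hpos).le hd).1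
      ((pow_Hk_div_Hk_succ_le hi hjm hpos).trans hratio.le)
  have hsq : Hk m 1 lam ^ 2 = Hk m 2 lam := by
    have := le_antisymm h01 h10
    rw [Hk_zero, div_eq_div_iff (Hk_pos (by omega) hpos).ne' (Hk_pos (by omega) hpos).ne'] at this
    linear_combination -this
  exact eq_of_Hk_one_sq_eq_Hk_two (by omega) hsq

/-- Equality (H_i/H_j)^{1/(j-i)} = H₀/H₁ for positive λ forces all λ equal. -/
theorem rpow_ratio_equality_rigidity (m : ℕ) (hm : 2 ≤ m) (lam : Fin m → ℝ)
    (hpos : ∀ a, 0 < lam a) (i j : ℕ) (hi : 1 ≤ i) (hij : i < j) (hjm : j ≤ m)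
    (heq : (Hk m i lam / Hk m j lam) ^ ((1 : ℝ) / ((j : ℝ) - (i : ℝ))) =
      Hk m 0 lam / Hk m 1 lam) :
    ∀ a b : Fin m, lam a = lam b :=
  rpow_ratio_equality_rigidity_general m lam hpos i j hi hij hjm heq
end
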